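/- arXiv:2412.10197 — 6 statements merged into one kernel-verified Lean document; each statement's English description precedes it below -/
import Mathlib

section
/- Let S be an n×n nonzero real symmetric matrix with spectral radius ρ, and let μ_ρ and μ_{-ρ} denote the algebraic multiplicities of ρ and -ρ as eigenvalues of S (possibly zero). Then there exists a real symmetric matrix Ŝ of order 2n - μ_ρ - μ_{-ρ} such that S is a principal submatrix of Ŝ and Ŝᵀ Ŝ = ρ² I. -/
open Matrix Polynomial

/-- `S` is a principal submatrix of `Q`. -/
def IsPrincipalSubmatrix {m n : ℕ} (S : Matrix (Fin m) (Fin m) ℝ)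
    (Q : Matrix (Fin n) (Fin n) ℝ) : Prop :=
  ∃ f : Fin m → Fin n, StrictMono f ∧ ∀ i j, S i j = Q (f i) (f j)

/-- `Q` is quasi-orthogonal: `Qᵀ * Q = q • 1` for some `q > 0`. -/
def IsQuasiOrthogonal {n : ℕ} (Q : Matrix (Fin n) (Fin n) ℝ) : Prop :=
  ∃ q : ℝ, 0 < q ∧ Qᵀ * Q = q • (1 : Matrix (Fin n) (Fin n) ℝ)

/-- algebraic multiplicity of `lam` as an eigenvalue of `S` (0 if not a root). -/
noncomputable def eigMult {n : ℕ} (S : Matrix (Fin n) (Fin n) ℝ) (lam : ℝ) : ℕ :=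
  (Matrix.charpoly S).rootMultiplicity lam

/-- `ρ` is the spectral radius of the real matrix `S`. -/
def IsSpectralRadius {n : ℕ} (S : Matrix (Fin n) (Fin n) ℝ) (ρ : ℝ) : Prop :=
  ((Matrix.charpoly S).IsRoot ρ ∨ (Matrix.charpoly S).IsRoot (-ρ)) ∧
    ∀ lam : ℝ, (Matrix.charpoly S).IsRoot lam → |lam| ≤ ρ

/-- quasi-orthogonality index: least `d` such that `S` is a principal submatrix of a
symmetric quasi-orthogonal matrix of order `n + d`. -/
noncomputable def qIndex {n : ℕ} (S : Matrix (Fin n) (Fin n) ℝ) : ℕ :=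
  sInf {d : ℕ | ∃ Q : Matrix (Fin (n + d)) (Fin (n + d)) ℝ,
    Q.IsSymm ∧ IsQuasiOrthogonal Q ∧ IsPrincipalSubmatrix S Q}

/-- symmetric Seidel matrix: zero diagonal, off-diagonal entries `±1`. -/
def IsSeidel {n : ℕ} (S : Matrix (Fin n) (Fin n) ℝ) : Prop :=
  S.IsSymm ∧ (∀ i, S i i = 0) ∧ ∀ i j, i ≠ j → S i j = 1 ∨ S i j = -1

/-!
Diagonalise `S = U D Uᵀ`, `U` orthogonal, `D = diag λ`, and put `C = diag c`, `cᵢ = √(ρ² - λᵢ²)`.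
The symmetric matrix `[[S, U C], [C Uᵀ, -D]] = W [[D, C], [C, -D]] Wᵀ`, `W = diag(U, 1)`,
squares to `ρ² I` because `λᵢ² + cᵢ² = ρ²`. Row and column `n + i` with `cᵢ = 0`, i.e.
`λᵢ = ±ρ`, vanish off the diagonal, so deleting them keeps the square equal to `ρ² I`. Since
`S ≠ 0` forces `ρ > 0`, exactly `μ_ρ + μ_{-ρ}` indices are deleted.
-/

open Finset

theorem Matrix.submatrix_mul_submatrix_of_eq_zero {k l m n o p R : Type*} [Fintype m] [Fintype n]
    [NonUnitalNonAssocSemiring R] (N : Matrix l m R) (M : Matrix m o R) {f : k → l} {g : n → m}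
    (h : p → o) (hg : Function.Injective g) (hN : ∀ a, ∀ x ∉ Set.range g, N (f a) x = 0) :
    N.submatrix f g * M.submatrix g h = (N * M).submatrix f h := by
  ext a b
  exact Fintype.sum_of_injective g hg _ _ (fun x hx => by simp [hN a x hx]) fun _ => rfl

theorem Finset.card_filter_eq_add_card_filter_eq_add_card_filter_ne_and_ne {ι α : Type*}
    [Fintype ι] [DecidableEq ι] [DecidableEq α] (f : ι → α) {a b : α} (hab : a ≠ b) :
    #{i | f i = a} + #{i | f i = b} + #{i | f i ≠ a ∧ f i ≠ b} = Fintype.card ι := by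
  have hdisj : Disjoint (α := Finset ι) {i | f i = a} {i | f i = b} :=
    disjoint_filter.2 fun i _ ha hb => hab (ha.symm.trans hb)
  rw [← card_union_of_disjoint hdisj, ← filter_or]
  simpa only [not_or, card_univ] using
    card_filter_add_card_filter_not (s := univ) fun i => f i = a ∨ f i = b

theorem sq_add_sqrt_sq_sub_sq {x ρ : ℝ} (hx : |x| ≤ ρ) : x ^ 2 + √(ρ ^ 2 - x ^ 2) ^ 2 = ρ ^ 2 := by
  rw [Real.sq_sqrt (sub_nonneg.mpr (sq_le_sq' (abs_le.mp hx).1 (abs_le.mp hx).2)),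
    add_sub_cancel]

theorem sqrt_sq_sub_sq_ne_zero_iff {x ρ : ℝ} (hx : |x| ≤ ρ) :
    √(ρ ^ 2 - x ^ 2) ≠ 0 ↔ x ≠ ρ ∧ x ≠ -ρ := by
  have hρ : 0 ≤ ρ := (abs_nonneg x).trans hx
  rw [Real.sqrt_ne_zero', sub_pos, ← sq_abs x, sq_lt_sq₀ (abs_nonneg x) hρ, hx.lt_iff_ne, Ne,
    abs_eq hρ, not_or]

theorem Matrix.IsHermitian.exists_orthogonal_conj_diagonal {ι : Type*} [Fintype ι]
    [DecidableEq ι] {S : Matrix ι ι ℝ} (hS : S.IsHermitian) :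
    ∃ U : Matrix ι ι ℝ, Uᵀ * U = 1 ∧ S = U * diagonal hS.eigenvalues * Uᵀ := by
  refine ⟨hS.eigenvectorUnitary, ?_, ?_⟩
  · simpa [star_eq_conjTranspose] using Unitary.coe_star_mul_self hS.eigenvectorUnitary
  · simpa [star_eq_conjTranspose] using hS.spectral_theorem

section SpectralExtension

variable {ι R : Type*} [Fintype ι] [DecidableEq ι] [CommRing R]

def spectralExtension (U : Matrix ι ι R) (d c : ι → R) : Matrix (ι ⊕ ι) (ι ⊕ ι) R :=
  fromBlocks (U * diagonal d * Uᵀ) (U * diagonal c) (diagonal c * Uᵀ) (-diagonal d)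

theorem spectralExtension_isSymm (U : Matrix ι ι R) (d c : ι → R) :
    (spectralExtension U d c).IsSymm := by
  simp [spectralExtension, IsSymm, fromBlocks_transpose, transpose_mul, mul_assoc]

theorem spectralExtension_mul_self {U : Matrix ι ι R} (hU : Uᵀ * U = 1) {d c : ι → R} {r : R}
    (hdc : ∀ i, d i ^ 2 + c i ^ 2 = r) :
    spectralExtension U d c * spectralExtension U d c = r • 1 := by
  set W : Matrix (ι ⊕ ι) (ι ⊕ ι) R := fromBlocks U 0 0 1
  set N : Matrix (ι ⊕ ι) (ι ⊕ ι) R :=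
    fromBlocks (diagonal d) (diagonal c) (diagonal c) (-diagonal d)
  have hW : Wᵀ * W = 1 := by simp [W, fromBlocks_transpose, fromBlocks_multiply, hU]
  have hN : N * N = r • 1 := by
    have hdc₁ : ∀ i, d i * d i + c i * c i = r := fun i => by linear_combination hdc i
    have hdc₂ : ∀ i, c i * c i + d i * d i = r := fun i => by linear_combination hdc i
    simp [N, fromBlocks_multiply, hdc₁, hdc₂, mul_comm (c _), smul_one_eq_diagonal]
  have hconj : spectralExtension U d c = W * N * Wᵀ := by
    simp [spectralExtension, W, N, fromBlocks_transpose, fromBlocks_multiply]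
  calc spectralExtension U d c * spectralExtension U d c
      = W * (N * (Wᵀ * W) * N) * Wᵀ := by simp only [hconj, Matrix.mul_assoc]
    _ = r • 1 := by
      rw [hW, Matrix.mul_one, hN, Matrix.mul_smul, Matrix.smul_mul, Matrix.mul_one,
        mul_eq_one_comm.mp hW]

theorem spectralExtension_submatrix_mul_self {U : Matrix ι ι R} (hU : Uᵀ * U = 1)
    {d c : ι → R} {r : R} (hdc : ∀ i, d i ^ 2 + c i ^ 2 = r) {m : Type*} [Fintype m]
    [DecidableEq m] {F : m → ι ⊕ ι} (hF : Function.Injective F)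
    (hinl : ∀ i, Sum.inl i ∈ Set.range F) (hinr : ∀ i, c i ≠ 0 → Sum.inr i ∈ Set.range F) :
    (spectralExtension U d c).submatrix F F * (spectralExtension U d c).submatrix F F = r • 1 := by
  rw [submatrix_mul_submatrix_of_eq_zero _ _ _ hF, spectralExtension_mul_self hU hdc,
    submatrix_smul, Pi.smul_apply, Pi.smul_apply, submatrix_one _ hF]
  rintro a (i | i) hi
  · exact absurd (hinl i) hi
  · have hc : c i = 0 := not_imp_comm.mp (hinr i) hi
    rcases ha : F a with j | j
    · simp [spectralExtension, hc]
    · have hji : j ≠ i := by rintro rfl; exact hi ⟨a, ha⟩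
      simp [spectralExtension, hji]

end SpectralExtension

theorem exists_symm_extension_of_eq_conj_diagonal {n : ℕ} {S U : Matrix (Fin n) (Fin n) ℝ}
    (hU : Uᵀ * U = 1) {d c : Fin n → ℝ} {r : ℝ} (hSU : S = U * diagonal d * Uᵀ)
    (hdc : ∀ i, d i ^ 2 + c i ^ 2 = r) :
    ∃ Shat : Matrix (Fin (n + Fintype.card {i // c i ≠ 0}))
      (Fin (n + Fintype.card {i // c i ≠ 0})) ℝ,
      Shat.IsSymm ∧ IsPrincipalSubmatrix S Shat ∧ Shatᵀ * Shat = r • 1 := by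
  subst hSU
  let F : Fin (n + Fintype.card {i // c i ≠ 0}) → Fin n ⊕ Fin n :=
    Sum.map id (Subtype.val ∘ (Fintype.equivFin _).symm) ∘ finSumFinEquiv.symm
  have hF : Function.Injective F :=
    (Sum.map_injective.mpr ⟨Function.injective_id,
      Subtype.val_injective.comp (Equiv.injective _)⟩).comp finSumFinEquiv.symm.injective
  have hsymm := (spectralExtension_isSymm U d c).submatrix F
  refine ⟨_, hsymm, ⟨Fin.castAdd _, Fin.strictMono_castAdd _,
    fun i j => by simp [F, spectralExtension]⟩, ?_⟩
  rw [hsymm.eq]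
  exact spectralExtension_submatrix_mul_self hU hdc hF (fun i => ⟨Fin.castAdd _ i, by simp [F]⟩)
    fun i hi => ⟨Fin.natAdd n (Fintype.equivFin _ ⟨i, hi⟩), by simp [F]⟩

section SpectralRadius

variable {n : ℕ} {S : Matrix (Fin n) (Fin n) ℝ}

theorem eigMult_eq_card (hS : S.IsHermitian) (lam : ℝ) :
    eigMult S lam = #{i | hS.eigenvalues i = lam} := by
  rw [eigMult, ← count_roots, hS.roots_charpoly_eq_eigenvalues, Multiset.count_map]
  simp [Finset.card, Finset.filter_val, eq_comm]

theorem IsSpectralRadius.abs_eigenvalues_le {ρ : ℝ} (hρ : IsSpectralRadius S ρ)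
    (hS : S.IsHermitian) (i : Fin n) : |hS.eigenvalues i| ≤ ρ := by
  refine hρ.2 _ (mem_roots'.mp ?_).2
  simp [hS.roots_charpoly_eq_eigenvalues]

theorem IsSpectralRadius.pos {ρ : ℝ} (hρ : IsSpectralRadius S ρ) (hS : S.IsHermitian)
    (hS0 : S ≠ 0) : 0 < ρ := by
  obtain ⟨i, hi⟩ := Function.ne_iff.mp (hS.eigenvalues_eq_zero_iff.not.mpr hS0)
  exact (abs_pos.mpr hi).trans_le (hρ.abs_eigenvalues_le hS i)

end SpectralRadius

theorem stmt0 {n : ℕ} (S : Matrix (Fin n) (Fin n) ℝ) (hsymm : S.IsSymm) (hS0 : S ≠ 0)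
    (ρ : ℝ) (hρ : IsSpectralRadius S ρ) :
    ∃ Shat : Matrix (Fin (2 * n - eigMult S ρ - eigMult S (-ρ)))
      (Fin (2 * n - eigMult S ρ - eigMult S (-ρ))) ℝ,
      Shat.IsSymm ∧ IsPrincipalSubmatrix S Shat ∧
      Shatᵀ * Shat = (ρ ^ 2) • (1 : Matrix (Fin (2 * n - eigMult S ρ - eigMult S (-ρ)))
        (Fin (2 * n - eigMult S ρ - eigMult S (-ρ))) ℝ) := by
  have hS : S.IsHermitian := isHermitian_iff_isSymm.mpr hsymm
  have hρ0 : 0 < ρ := hρ.pos hS hS0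
  have hbound := hρ.abs_eigenvalues_le hS
  obtain ⟨U, hU, hSU⟩ := hS.exists_orthogonal_conj_diagonal
  have hdim : 2 * n - eigMult S ρ - eigMult S (-ρ)
      = n + Fintype.card {i // √(ρ ^ 2 - hS.eigenvalues i ^ 2) ≠ 0} := by
    have hcount := card_filter_eq_add_card_filter_eq_add_card_filter_ne_and_ne hS.eigenvalues
      (show ρ ≠ -ρ by linarith)
    rw [Fintype.card_fin] at hcount
    rw [eigMult_eq_card hS, eigMult_eq_card hS, Fintype.card_subtype,
      filter_congr fun i _ => sqrt_sq_sub_sq_ne_zero_iff (hbound i)]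
    omega
  rw [hdim]
  exact exists_symm_extension_of_eq_conj_diagonal hU hSU fun i =>
    sq_add_sqrt_sq_sub_sq (hbound i)
end

section
/- Let S be an m×m real symmetric matrix with spectral radius ρ, and let Ŝ be a symmetric quasi-orthogonal extension of S of order n ≥ 2 with spectral radius ρ̂. If n - m ≤ (n-1)/2, then ρ̂ = ρ and n ≥ 2m - (μ_ρ(S) + μ_{-ρ}(S)). -/
/-!
Symmetry and quasi-orthogonality give `Ŝ * Ŝ = q • 1`, so every eigenvalue of `Ŝ` squares to `q`
and `ρ̂² = q`. For an eigenvector `v` of `S` with eigenvalue `λ`, padding `v` by zeros to `w` and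
applying Cauchy–Schwarz to `⟪w, Ŝ w⟫ = λ ‖v‖²` gives `λ² ≤ q`, hence `ρ ≤ ρ̂`. Conversely,
`(Ŝ - ρ̂)(Ŝ + ρ̂) = 0` gives `rank (Ŝ - ρ̂) + rank (Ŝ + ρ̂) ≤ n`; ranks can only drop on passing to a
principal submatrix, and for symmetric `S` we have `rank (S - t) = m - μ_t(S)`. Hence
`2m - (μ_ρ̂(S) + μ_{-ρ̂}(S)) ≤ n`, and as `n < 2m` this makes `ρ̂` or `-ρ̂` an eigenvalue of `S`,
i.e. `ρ̂ ≤ ρ`.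
-/

open Matrix Polynomial

namespace Matrix

section Field

variable {ι K : Type*} [Fintype ι] [DecidableEq ι] [Field K]

theorem exists_mulVec_eq_smul_of_isRoot_charpoly {A : Matrix ι ι K} {x : K}
    (h : A.charpoly.IsRoot x) : ∃ v ≠ 0, A *ᵥ v = x • v := by
  obtain ⟨v, hv, hAv⟩ := exists_mulVec_eq_zero_iff.mpr ((eval_charpoly A x).symm.trans h)
  refine ⟨v, hv, ?_⟩
  rw [sub_mulVec, scalar_apply, ← smul_one_eq_diagonal, smul_mulVec, one_mulVec,
    sub_eq_zero] at hAv
  exact hAv.symm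

theorem sq_eq_of_isRoot_charpoly_of_mul_self_eq {A : Matrix ι ι K} {q x : K}
    (hA : A * A = q • 1) (hx : A.charpoly.IsRoot x) : x ^ 2 = q := by
  obtain ⟨v, hv, hAv⟩ := exists_mulVec_eq_smul_of_isRoot_charpoly hx
  refine smul_left_injective K hv ?_
  calc x ^ 2 • v = A *ᵥ (A *ᵥ v) := by rw [hAv, mulVec_smul, hAv, smul_smul, sq]
    _ = q • v := by rw [mulVec_mulVec, hA, smul_mulVec, one_mulVec]

end Field

section Submatrix

variable {ι κ R : Type*} [DecidableEq κ]

theorem one_submatrix_mul_mul_transpose [Fintype κ] [CommSemiring R] (f : ι → κ)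
    (Q : Matrix κ κ R) :
    (1 : Matrix κ κ R).submatrix f id * Q * ((1 : Matrix κ κ R).submatrix f id)ᵀ =
      Q.submatrix f f := by
  ext i j
  simp [mul_apply, one_apply]

theorem one_submatrix_mul_transpose [Fintype κ] [DecidableEq ι] [CommSemiring R] {f : ι → κ}
    (hf : f.Injective) :
    (1 : Matrix κ κ R).submatrix f id * ((1 : Matrix κ κ R).submatrix f id)ᵀ = 1 := by
  simpa [submatrix_one _ hf] using one_submatrix_mul_mul_transpose f (1 : Matrix κ κ R)

theorem submatrix_sub_smul_one [DecidableEq ι] [Ring R] (Q : Matrix κ κ R) {f : ι → κ}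
    (hf : f.Injective) (t : R) :
    (Q - t • 1).submatrix f f = Q.submatrix f f - t • 1 := by
  ext i j
  simp [one_apply, hf.eq_iff]

end Submatrix

variable {ι κ : Type*} [Fintype ι] [DecidableEq ι] [Fintype κ] [DecidableEq κ]

theorem sq_le_of_isRoot_charpoly_submatrix {Q : Matrix κ κ ℝ} {q : ℝ} (hQ : Qᵀ * Q = q • 1)
    {f : ι → κ} (hf : f.Injective) {e : ℝ} (he : (Q.submatrix f f).charpoly.IsRoot e) :
    e ^ 2 ≤ q := by
  obtain ⟨v, hv, hSv⟩ := exists_mulVec_eq_smul_of_isRoot_charpoly he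
  -- `w` is `v` padded by zeros; apply Cauchy–Schwarz to `⟪w, Q w⟫ = e ‖v‖²`.
  set P := (1 : Matrix κ κ ℝ).submatrix f id
  set w := Pᵀ *ᵥ v
  have hvv : 0 < v ⬝ᵥ v := by simpa using dotProduct_star_self_pos_iff.mpr hv
  have hww : w ⬝ᵥ w = v ⬝ᵥ v := by
    rw [dotProduct_comm, dotProduct_transpose_mulVec, mulVec_mulVec,
      one_submatrix_mul_transpose hf, one_mulVec]
  have hwQw : w ⬝ᵥ (Q *ᵥ w) = e * (v ⬝ᵥ v) := by
    rw [dotProduct_comm, dotProduct_transpose_mulVec, mulVec_mulVec, mulVec_mulVec,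
      one_submatrix_mul_mul_transpose, hSv, dotProduct_smul, smul_eq_mul]
  have hQwQw : (Q *ᵥ w) ⬝ᵥ (Q *ᵥ w) = q * (v ⬝ᵥ v) := by
    rw [← dotProduct_transpose_mulVec, mulVec_mulVec, hQ, smul_mulVec, one_mulVec,
      dotProduct_smul, smul_eq_mul, hww]
  have hCS : (w ⬝ᵥ (Q *ᵥ w)) ^ 2 ≤ (w ⬝ᵥ w) * ((Q *ᵥ w) ⬝ᵥ (Q *ᵥ w)) := by
    simpa [dotProduct, sq] using Finset.sum_mul_sq_le_sq_mul_sq Finset.univ w (Q *ᵥ w)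
  rw [hwQw, hww, hQwQw] at hCS
  exact le_of_mul_le_mul_right (by linarith) (mul_pos hvv hvv)

theorem IsHermitian.rank_add_rootMultiplicity_zero {A : Matrix ι ι ℝ} (hA : A.IsHermitian) :
    A.rank + A.charpoly.rootMultiplicity 0 = Fintype.card ι := by
  have hcount : A.charpoly.rootMultiplicity 0 = Fintype.card {i // hA.eigenvalues i = 0} := by
    rw [← count_roots, hA.roots_charpoly_eq_eigenvalues, Multiset.count_map, Fintype.card_subtype]
    simp only [Function.comp_apply, RCLike.ofReal_real_eq_id, id_eq, eq_comm (a := (0 : ℝ))]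
    rfl
  rw [hA.rank_eq_card_non_zero_eigs, hcount, Fintype.card_subtype_compl]
  exact Nat.sub_add_cancel (Fintype.card_subtype_le _)

theorem IsHermitian.rank_sub_smul_one_add_rootMultiplicity {A : Matrix ι ι ℝ}
    (hA : A.IsHermitian) (t : ℝ) :
    (A - t • 1).rank + A.charpoly.rootMultiplicity t = Fintype.card ι := by
  have hAt : (A - t • 1).IsHermitian := hA.sub (isHermitian_one.smul (IsSelfAdjoint.all t))
  rw [← hAt.rank_add_rootMultiplicity_zero, rootMultiplicity_eq_natTrailingDegree,
    rootMultiplicity_eq_natTrailingDegree', smul_one_eq_diagonal, ← scalar_apply,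
    charpoly_sub_scalar]

theorem two_mul_card_le_card_add_rootMultiplicity_submatrix {Q : Matrix κ κ ℝ} {t : ℝ}
    (hQ : Q * Q = t ^ 2 • 1) {f : ι → κ} (hf : f.Injective)
    (hS : (Q.submatrix f f).IsHermitian) :
    2 * Fintype.card ι ≤ Fintype.card κ +
      ((Q.submatrix f f).charpoly.rootMultiplicity t +
        (Q.submatrix f f).charpoly.rootMultiplicity (-t)) := by
  have hfactor : (Q - t • 1) * (Q - (-t) • 1) = 0 := by
    rw [sub_mul, mul_sub, mul_sub, hQ]
    simp only [Matrix.mul_smul, Matrix.smul_mul, Matrix.mul_one, Matrix.one_mul, smul_smul]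
    module
  have hranks := rank_add_rank_le_card_of_mul_eq_zero hfactor
  have hsub (s : ℝ) : (Q.submatrix f f - s • 1).rank ≤ (Q - s • 1).rank := by
    rw [← Q.submatrix_sub_smul_one hf]
    exact rank_submatrix_le _ f f
  have ht := hS.rank_sub_smul_one_add_rootMultiplicity t
  have hnt := hS.rank_sub_smul_one_add_rootMultiplicity (-t)
  have := hsub t
  have := hsub (-t)
  omega

end Matrix

namespace IsSpectralRadius

variable {n : ℕ} {A : Matrix (Fin n) (Fin n) ℝ} {ρ : ℝ}

theorem nonneg (h : IsSpectralRadius A ρ) : 0 ≤ ρ := by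
  rcases h.1 with hr | hr
  · exact (abs_nonneg _).trans (h.2 _ hr)
  · exact (abs_nonneg _).trans (h.2 _ hr)

theorem exists_isRoot_sq_eq (h : IsSpectralRadius A ρ) :
    ∃ x, A.charpoly.IsRoot x ∧ x ^ 2 = ρ ^ 2 := by
  rcases h.1 with hr | hr
  · exact ⟨ρ, hr, rfl⟩
  · exact ⟨-ρ, hr, neg_sq ρ⟩

end IsSpectralRadius

theorem stmt1_general {m n : ℕ}
    (S : Matrix (Fin m) (Fin m) ℝ)
    (ρ : ℝ) (hρ : IsSpectralRadius S ρ)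
    (Shat : Matrix (Fin n) (Fin n) ℝ) (hShat : Shat.IsSymm)
    (hQO : IsQuasiOrthogonal Shat) (hsub : IsPrincipalSubmatrix S Shat)
    (ρhat : ℝ) (hρhat : IsSpectralRadius Shat ρhat)
    (hcond : (n : ℝ) - m ≤ ((n : ℝ) - 1) / 2) :
    ρhat = ρ ∧ (n : ℤ) ≥ 2 * m - (eigMult S ρ + eigMult S (-ρ)) := by
  obtain ⟨f, hf, hfS⟩ := hsub
  obtain rfl : S = Shat.submatrix f f := Matrix.ext hfS
  obtain ⟨q, -, hQ⟩ := hQO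
  have hQQ : Shat * Shat = q • 1 := by rwa [hShat.eq] at hQ
  have hρhat_sq : ρhat ^ 2 = q := by
    obtain ⟨x, hx, hxρ⟩ := hρhat.exists_isRoot_sq_eq
    rw [← hxρ, sq_eq_of_isRoot_charpoly_of_mul_self_eq hQQ hx]
  have hρ_sq : ρ ^ 2 ≤ ρhat ^ 2 := by
    obtain ⟨x, hx, hxρ⟩ := hρ.exists_isRoot_sq_eq
    rw [← hxρ, hρhat_sq]
    exact sq_le_of_isRoot_charpoly_submatrix hQ hf.injective hx
  have hmult := two_mul_card_le_card_add_rootMultiplicity_submatrix (hρhat_sq ▸ hQQ)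
    hf.injective (isHermitian_iff_isSymm.mpr (hShat.submatrix f))
  simp only [Fintype.card_fin] at hmult
  have hnm : n + 1 ≤ 2 * m := by exact_mod_cast (by linarith : (n : ℝ) + 1 ≤ 2 * m)
  have hρhat_le : ρhat ≤ ρ := by
    have hne := (Shat.submatrix f f).charpoly_monic.ne_zero
    by_cases h : 0 < (Shat.submatrix f f).charpoly.rootMultiplicity ρhat
    · simpa [abs_of_nonneg hρhat.nonneg] using hρ.2 _ ((rootMultiplicity_pos hne).mp h)
    · have h' : 0 < (Shat.submatrix f f).charpoly.rootMultiplicity (-ρhat) := by omega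
      simpa [abs_of_nonneg hρhat.nonneg] using hρ.2 _ ((rootMultiplicity_pos hne).mp h')
  have hρ_eq : ρhat = ρ :=
    le_antisymm hρhat_le ((pow_le_pow_iff_left₀ hρ.nonneg hρhat.nonneg two_ne_zero).mp hρ_sq)
  refine ⟨hρ_eq, ?_⟩
  subst hρ_eq
  unfold eigMult
  omega

theorem stmt1 {m n : ℕ} (hn : 2 ≤ n)
    (S : Matrix (Fin m) (Fin m) ℝ) (hsymm : S.IsSymm)
    (ρ : ℝ) (hρ : IsSpectralRadius S ρ)
    (Shat : Matrix (Fin n) (Fin n) ℝ) (hShat : Shat.IsSymm)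
    (hQO : IsQuasiOrthogonal Shat) (hsub : IsPrincipalSubmatrix S Shat)
    (ρhat : ℝ) (hρhat : IsSpectralRadius Shat ρhat)
    (hcond : (n : ℝ) - m ≤ ((n : ℝ) - 1) / 2) :
    ρhat = ρ ∧ (n : ℤ) ≥ 2 * m - (eigMult S ρ + eigMult S (-ρ)) :=
  stmt1_general S ρ hρ Shat hShat hQO hsub ρhat hρhat hcond
end

section
/- Let S be an n×n nonzero real symmetric matrix with spectral radius ρ. The least integer d such that S admits a symmetric quasi-orthogonal extension of order n + d equals n - μ_ρ(S) - μ_{-ρ}(S). -/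
/-
Diagonalize `S = U diag(μ) Uᵀ`; then `ρ = max |μ i|`, attained.

Lower bound: if `Q` is quasi-orthogonal, `QᵀQ = q I`, and `S` sits in `Q` on the rows and columns
of an index set `J`, then `q I - S² = BᵀB`, where `B` is the block of `Q` with rows off `J` and
columns in `J`. Hence `q I - S²` is positive semidefinite, so `q ≥ ρ²`, and its rank, the number of
`i` with `μ i² ≠ q`, is at most the number of rows of `B`, i.e. the order of `Q` minus `n`; the
eigenvalues with `μ i² ≠ q` include all those with `|μ i| ≠ ρ`.

Upper bound: in the eigenbasis, each eigenvalue with `|μ i| < ρ` is completed to the `2 × 2` block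
`[[μ i, √(ρ² - μ i²)], [√(ρ² - μ i²), -μ i]]`, whose square is `ρ² I`, and eigenvalues `±ρ` need no
new index.
-/

open Matrix Polynomial

open Finset Unitary

theorem Matrix.transpose_mul_self_submatrix {ι κ R : Type*} [Fintype ι] [Fintype κ]
    [NonUnitalNonAssocSemiring R] (Q : Matrix ι ι R) {f : κ → ι} (hf : Function.Injective f)
    [DecidablePred (· ∈ Set.range f)] :
    (Qᵀ * Q).submatrix f f = (Q.submatrix f f)ᵀ * Q.submatrix f f +
      (Q.submatrix ((↑) : {a // a ∉ Set.range f} → ι) f)ᵀ *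
        Q.submatrix ((↑) : {a // a ∉ Set.range f} → ι) f := by
  ext i j
  simp only [submatrix_apply, mul_apply, transpose_apply, add_apply]
  rw [← Fintype.sum_subtype_add_sum_subtype (· ∈ Set.range f)]
  congr 1
  exact (Fintype.sum_equiv (Equiv.ofInjective f hf) _ _ fun k => rfl).symm

theorem Matrix.smul_one_sub_transpose_mul_submatrix {ι κ R : Type*} [Fintype ι] [Fintype κ]
    [DecidableEq ι] [DecidableEq κ] [CommRing R] {Q : Matrix ι ι R} {q : R}
    (hQ : Qᵀ * Q = q • 1) {f : κ → ι} (hf : Function.Injective f)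
    [DecidablePred (· ∈ Set.range f)] :
    q • 1 - (Q.submatrix f f)ᵀ * Q.submatrix f f =
      (Q.submatrix ((↑) : {a // a ∉ Set.range f} → ι) f)ᵀ *
        Q.submatrix ((↑) : {a // a ∉ Set.range f} → ι) f := by
  have hone : (q • 1 : Matrix ι ι R).submatrix f f = q • 1 := by
    rw [← submatrix_one f hf]
    rfl
  rw [← hone, ← hQ, Q.transpose_mul_self_submatrix hf, add_sub_cancel_left]

theorem IsPrincipalSubmatrix.exists_posSemidef_rank_le {n d : ℕ} {S : Matrix (Fin n) (Fin n) ℝ}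
    {Q : Matrix (Fin (n + d)) (Fin (n + d)) ℝ} (h : IsPrincipalSubmatrix S Q) (hS : S.IsSymm)
    (hQ : IsQuasiOrthogonal Q) :
    ∃ q : ℝ, (q • 1 - S * S).PosSemidef ∧ (q • 1 - S * S).rank ≤ d := by
  classical
  obtain ⟨f, hf, hSQ⟩ := h
  obtain ⟨q, -, hQ⟩ := hQ
  have hSf : S = Q.submatrix f f := Matrix.ext hSQ
  set B := Q.submatrix ((↑) : {a // a ∉ Set.range f} → Fin (n + d)) f
  have hgram : q • 1 - S * S = Bᵀ * B := by
    rw [← smul_one_sub_transpose_mul_submatrix hQ hf.injective, ← hSf, hS.eq]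
  refine ⟨q, hgram ▸ by simpa using posSemidef_conjTranspose_mul_self B, ?_⟩
  calc (q • 1 - S * S).rank = B.rank := by rw [hgram, rank_transpose_mul_self]
    _ ≤ Fintype.card {a // a ∉ Set.range f} := rank_le_card_height B
    _ = d := by
      rw [Fintype.card_subtype_compl, Set.card_range_of_injective hf.injective]
      simp

section UnitaryConj

variable {κ R : Type*} [Fintype κ] [DecidableEq κ] [CommRing R] [StarRing R]
  (u : unitary (Matrix κ κ R)) (A : Matrix κ κ R)

theorem Matrix.charpoly_conjStarAlgAut : (conjStarAlgAut R _ u A).charpoly = A.charpoly := by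
  rw [conjStarAlgAut_apply, charpoly_mul_comm, ← mul_assoc, coe_star_mul_self, one_mul]

theorem Matrix.rank_conjStarAlgAut : (conjStarAlgAut R _ u A).rank = A.rank := by
  rw [conjStarAlgAut_apply, rank_mul_eq_left_of_isUnit_det _ _
    ((isUnit_iff_isUnit_det _).mp isUnit_coe.star),
    rank_mul_eq_right_of_isUnit_det _ _ ((isUnit_iff_isUnit_det _).mp isUnit_coe)]

theorem Matrix.posSemidef_conjStarAlgAut_iff [PartialOrder R] :
    (conjStarAlgAut R _ u A).PosSemidef ↔ A.PosSemidef :=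
  isUnit_coe.posSemidef_star_right_conjugate_iff

end UnitaryConj

theorem Matrix.IsSymm.conjStarAlgAut {κ : Type*} [Fintype κ] [DecidableEq κ]
    {A : Matrix κ κ ℝ} (h : A.IsSymm) (u : unitary (Matrix κ κ ℝ)) :
    (Unitary.conjStarAlgAut ℝ _ u A).IsSymm := by
  rw [← isHermitian_iff_isSymm, isHermitian_iff_isSelfAdjoint] at h ⊢
  exact h.map _

theorem Matrix.IsSymm.exists_eq_conjStarAlgAut_diagonal {κ : Type*} [Fintype κ] [DecidableEq κ]
    {S : Matrix κ κ ℝ} (h : S.IsSymm) :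
    ∃ (u : unitary (Matrix κ κ ℝ)) (μ : κ → ℝ), S = Unitary.conjStarAlgAut ℝ _ u (diagonal μ) := by
  have hS : S.IsHermitian := isHermitian_iff_isSymm.mpr h
  exact ⟨hS.eigenvectorUnitary, hS.eigenvalues, by simpa using hS.spectral_theorem⟩

theorem Matrix.star_fromBlocks_zero₁₂_zero₂₁ {m n R : Type*} [AddMonoid R] [StarAddMonoid R]
    (A : Matrix m m R) (D : Matrix n n R) :
    star (fromBlocks A 0 0 D) = fromBlocks (star A) 0 0 (star D) := by
  simp [star_eq_conjTranspose, fromBlocks_conjTranspose]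

theorem Matrix.fromBlocks_mem_unitary {m n R : Type*} [Fintype m] [Fintype n] [DecidableEq m]
    [DecidableEq n] [CommRing R] [StarRing R] {A : Matrix m m R} {D : Matrix n n R}
    (hA : A ∈ unitary _) (hD : D ∈ unitary _) :
    fromBlocks A 0 0 D ∈ unitary (Matrix (m ⊕ n) (m ⊕ n) R) := by
  rw [Unitary.mem_iff] at *
  simp [star_fromBlocks_zero₁₂_zero₂₁, fromBlocks_multiply, hA, hD, ← fromBlocks_one]

theorem Matrix.toBlocks₁₁_fromBlocks_mul_mul {m n R : Type*} [Fintype m] [Fintype n] [Semiring R]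
    (A C : Matrix m m R) (B D : Matrix n n R) (M : Matrix (m ⊕ n) (m ⊕ n) R) :
    (fromBlocks A 0 0 B * M * fromBlocks C 0 0 D).toBlocks₁₁ = A * M.toBlocks₁₁ * C := by
  rw [← fromBlocks_toBlocks M]
  simp [fromBlocks_multiply]

section DiagonalCharpoly

variable {κ R : Type*} [Fintype κ] [DecidableEq κ] [CommRing R] [IsDomain R] (μ : κ → R)

theorem Matrix.isRoot_charpoly_diagonal_iff (a : R) :
    (diagonal μ).charpoly.IsRoot a ↔ ∃ i, μ i = a := by
  rw [IsRoot.def, charpoly_diagonal, eval_prod, prod_eq_zero_iff]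
  simp [sub_eq_zero, eq_comm]

theorem Matrix.rootMultiplicity_charpoly_diagonal [DecidableEq R] (a : R) :
    (diagonal μ).charpoly.rootMultiplicity a = #{i | μ i = a} := by
  rw [← count_roots, charpoly_diagonal,
    roots_prod _ _ (prod_ne_zero_iff.mpr fun i _ => X_sub_C_ne_zero (μ i))]
  simp only [roots_X_sub_C, Multiset.bind_singleton, Multiset.count_map, eq_comm]
  rfl

end DiagonalCharpoly

section SpectralData

variable {n : ℕ} (u : unitary (Matrix (Fin n) (Fin n) ℝ)) (μ : Fin n → ℝ)

theorem isSpectralRadius_conjStarAlgAut_diagonal_iff (ρ : ℝ) :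
    IsSpectralRadius (conjStarAlgAut ℝ _ u (diagonal μ)) ρ ↔
      (∃ i, |μ i| = ρ) ∧ ∀ i, |μ i| ≤ ρ := by
  simp only [IsSpectralRadius, charpoly_conjStarAlgAut, isRoot_charpoly_diagonal_iff,
    forall_exists_index, forall_apply_eq_imp_iff]
  refine and_congr_left fun hμ => ⟨?_, fun ⟨i, hi⟩ => ?_⟩
  · rintro (⟨i, hi⟩ | ⟨i, hi⟩) <;> refine ⟨i, (hμ i).antisymm ?_⟩ <;> simp [hi, le_abs_self]
  · rcases abs_choice (μ i) with h | h
    · exact .inl ⟨i, h ▸ hi⟩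
    · exact .inr ⟨i, by linarith⟩

theorem eigMult_conjStarAlgAut_diagonal (a : ℝ) :
    eigMult (conjStarAlgAut ℝ _ u (diagonal μ)) a = #{i | μ i = a} := by
  rw [eigMult, charpoly_conjStarAlgAut, rootMultiplicity_charpoly_diagonal]

end SpectralData

theorem card_eq_add_card_eq_neg {κ : Type*} [Fintype κ] (μ : κ → ℝ) {ρ : ℝ} (hρ : 0 < ρ) :
    #{i | μ i = ρ} + #{i | μ i = -ρ} = #{i | |μ i| = ρ} := by
  classical
  rw [← card_union_of_disjoint, ← filter_or]
  · simp only [abs_eq hρ.le]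
  · exact disjoint_filter.mpr fun i _ h h' => by linarith

theorem card_abs_ne_le_rank_smul_one_sub_mul_self {κ : Type*} [Fintype κ] [DecidableEq κ]
    {S : Matrix κ κ ℝ} (u : unitary (Matrix κ κ ℝ)) {μ : κ → ℝ}
    (hS : S = conjStarAlgAut ℝ _ u (diagonal μ)) {ρ q : ℝ} (hμ : ∀ i, |μ i| ≤ ρ)
    (hρ : ∃ i, |μ i| = ρ) (hq : (q • 1 - S * S).PosSemidef) :
    #{i | |μ i| ≠ ρ} ≤ (q • 1 - S * S).rank := by
  have hconj : q • 1 - S * S = conjStarAlgAut ℝ _ u (diagonal fun i => q - μ i ^ 2) := by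
    rw [hS, ← map_mul, ← map_one (conjStarAlgAut ℝ _ u), ← map_smul, ← map_sub,
      diagonal_mul_diagonal, smul_one_eq_diagonal, diagonal_sub]
    simp only [sq]
  rw [hconj, posSemidef_conjStarAlgAut_iff, posSemidef_diagonal_iff] at hq
  rw [hconj, rank_conjStarAlgAut, rank_diagonal, Fintype.card_subtype]
  obtain ⟨i₀, hi₀⟩ := hρ
  have hρq : ρ ^ 2 ≤ q := by simpa [← hi₀, sq_abs] using hq i₀
  refine card_le_card fun i => ?_
  simp only [mem_filter, mem_univ, true_and]
  intro hi hqi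
  exact hi (le_antisymm (hμ i) (by nlinarith [hq i, abs_nonneg (μ i), sq_abs (μ i)]))

section DiagonalExtension

variable {κ : Type*} [Fintype κ] [DecidableEq κ] (μ : κ → ℝ) (ρ : ℝ)

/-- Its square is `ρ² I` when all `|μ i| ≤ ρ`: the blocks `D = diag μ` and `E = diag √(ρ² - μ²)`
commute and `D² + E² = ρ² I`. -/
noncomputable def doubleExtension : Matrix (κ ⊕ κ) (κ ⊕ κ) ℝ :=
  fromBlocks (diagonal μ) (diagonal fun i => √(ρ ^ 2 - μ i ^ 2))
    (diagonal fun i => √(ρ ^ 2 - μ i ^ 2)) (-diagonal μ)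

/-- Where `|μ i| = ρ`, the row and column `inr i` of `doubleExtension μ ρ` vanish off the
diagonal, so deleting them keeps the square equal to `ρ² I`. -/
noncomputable def diagonalExtension :
    Matrix (κ ⊕ {i // |μ i| ≠ ρ}) (κ ⊕ {i // |μ i| ≠ ρ}) ℝ :=
  (doubleExtension μ ρ).submatrix (Sum.map id (↑)) (Sum.map id (↑))

omit [Fintype κ] in
theorem doubleExtension_isSymm : (doubleExtension μ ρ).IsSymm := by
  simp [doubleExtension, IsSymm, fromBlocks_transpose]

omit [Fintype κ] in
theorem diagonalExtension_isSymm : (diagonalExtension μ ρ).IsSymm :=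
  (doubleExtension_isSymm μ ρ).submatrix _

omit [Fintype κ] in
theorem toBlocks₁₁_diagonalExtension : (diagonalExtension μ ρ).toBlocks₁₁ = diagonal μ := by
  ext i j
  simp [diagonalExtension, doubleExtension, toBlocks₁₁]

variable {μ ρ}

theorem doubleExtension_mul_self (h : ∀ i, |μ i| ≤ ρ) :
    doubleExtension μ ρ * doubleExtension μ ρ = ρ ^ 2 • 1 := by
  have hsq : ∀ i, √(ρ ^ 2 - μ i ^ 2) * √(ρ ^ 2 - μ i ^ 2) = ρ ^ 2 - μ i ^ 2 := fun i =>
    Real.mul_self_sqrt (sub_nonneg.mpr (sq_le_sq' (abs_le.mp (h i)).1 (abs_le.mp (h i)).2))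
  simp only [doubleExtension, fromBlocks_multiply, diagonal_neg, diagonal_mul_diagonal,
    diagonal_add, hsq, ← fromBlocks_one, fromBlocks_smul, smul_zero, smul_one_eq_diagonal]
  rw [← diagonal_zero]
  congr 2 <;> funext i <;> ring

theorem diagonalExtension_mul_self (h : ∀ i, |μ i| ≤ ρ) :
    diagonalExtension μ ρ * diagonalExtension μ ρ = ρ ^ 2 • 1 := by
  classical
  set g : κ ⊕ {i // |μ i| ≠ ρ} → κ ⊕ κ := Sum.map id (↑)
  have hg : Function.Injective g := Function.injective_id.sumMap Subtype.val_injective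
  have hdeleted : (doubleExtension μ ρ).submatrix ((↑) : {a // a ∉ Set.range g} → _) g = 0 := by
    ext ⟨a, ha⟩ b
    rcases a with k | k
    · exact absurd ⟨Sum.inl k, rfl⟩ ha
    have hk : |μ k| = ρ := by
      by_contra hk
      exact ha ⟨Sum.inr ⟨k, hk⟩, rfl⟩
    rcases b with l | ⟨l, hl⟩
    · have hk' : ρ ^ 2 - μ k ^ 2 = 0 := by rw [← hk, sq_abs, sub_self]
      simp [g, doubleExtension, diagonal_apply, hk']
    · have hkl : k ≠ l := by rintro rfl; exact hl hk
      simp [g, doubleExtension, hkl]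
  have hN : (doubleExtension μ ρ)ᵀ * doubleExtension μ ρ = ρ ^ 2 • 1 := by
    rw [(doubleExtension_isSymm μ ρ).eq, doubleExtension_mul_self h]
  have hgram := smul_one_sub_transpose_mul_submatrix hN hg
  rw [hdeleted, Matrix.mul_zero, sub_eq_zero] at hgram
  calc diagonalExtension μ ρ * diagonalExtension μ ρ
      = (diagonalExtension μ ρ)ᵀ * diagonalExtension μ ρ := by
        rw [(diagonalExtension_isSymm μ ρ).eq]
    _ = ρ ^ 2 • 1 := hgram.symm

end DiagonalExtension

theorem exists_isQuasiOrthogonal_extension_of_toBlocks₁₁ {n : ℕ} {ι : Type*} [Fintype ι] [DecidableEq ι]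
    {S : Matrix (Fin n) (Fin n) ℝ} {Q : Matrix (Fin n ⊕ ι) (Fin n ⊕ ι) ℝ} (hQ : Q.IsSymm)
    {q : ℝ} (hq : 0 < q) (hQQ : Q * Q = q • 1) (hS : Q.toBlocks₁₁ = S) :
    ∃ P : Matrix (Fin (n + Fintype.card ι)) (Fin (n + Fintype.card ι)) ℝ,
      P.IsSymm ∧ IsQuasiOrthogonal P ∧ IsPrincipalSubmatrix S P := by
  let e := (Equiv.sumCongr (Equiv.refl (Fin n)) (Fintype.equivFin ι)).trans finSumFinEquiv
  refine ⟨Q.submatrix e.symm e.symm, hQ.submatrix _, ⟨q, hq, ?_⟩,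
    Fin.castAdd _, Fin.strictMono_castAdd _, fun i j => ?_⟩
  · rw [transpose_submatrix, hQ.eq, submatrix_mul_equiv, hQQ]
    ext a b
    simp [one_apply, e.symm.injective.eq_iff]
  · simp [e, ← hS, toBlocks₁₁]

theorem exists_isQuasiOrthogonal_extension_conjStarAlgAut_diagonal {n : ℕ}
    (u : unitary (Matrix (Fin n) (Fin n) ℝ)) {μ : Fin n → ℝ} {ρ : ℝ} (hρ : 0 < ρ)
    (hμ : ∀ i, |μ i| ≤ ρ) :
    ∃ P : Matrix (Fin (n + #{i | |μ i| ≠ ρ})) (Fin (n + #{i | |μ i| ≠ ρ})) ℝ,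
      P.IsSymm ∧ IsQuasiOrthogonal P ∧
        IsPrincipalSubmatrix (conjStarAlgAut ℝ _ u (diagonal μ)) P := by
  let v : unitary (Matrix (Fin n ⊕ {i // |μ i| ≠ ρ}) (Fin n ⊕ {i // |μ i| ≠ ρ}) ℝ) :=
    ⟨fromBlocks u 0 0 1, fromBlocks_mem_unitary u.2 (one_mem _)⟩
  rw [← Fintype.card_subtype]
  refine exists_isQuasiOrthogonal_extension_of_toBlocks₁₁
    ((diagonalExtension_isSymm μ ρ).conjStarAlgAut v) (pow_pos hρ 2) ?_ ?_
  · rw [← map_mul, diagonalExtension_mul_self hμ, map_smul, map_one]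
  · rw [conjStarAlgAut_apply, conjStarAlgAut_apply]
    simp only [v, star_fromBlocks_zero₁₂_zero₂₁, star_one]
    rw [toBlocks₁₁_fromBlocks_mul_mul, toBlocks₁₁_diagonalExtension]

theorem stmt2 {n : ℕ} (S : Matrix (Fin n) (Fin n) ℝ) (hsymm : S.IsSymm) (hS0 : S ≠ 0)
    (ρ : ℝ) (hρ : IsSpectralRadius S ρ) :
    qIndex S = n - (eigMult S ρ + eigMult S (-ρ)) := by
  obtain ⟨u, μ, rfl⟩ := hsymm.exists_eq_conjStarAlgAut_diagonal
  obtain ⟨hattained, hμ⟩ := (isSpectralRadius_conjStarAlgAut_diagonal_iff u μ ρ).mp hρ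
  have hρ0 : 0 < ρ := by
    obtain ⟨i, hi⟩ := hattained
    refine (hi ▸ abs_nonneg (μ i)).lt_of_ne' ?_
    rintro rfl
    exact hS0 (by simp [show μ = 0 from funext fun j => abs_nonpos_iff.mp (hμ j)])
  have hcompl : n - #{i | |μ i| = ρ} = #{i | |μ i| ≠ ρ} := by
    rw [← compl_filter, card_compl, Fintype.card_fin]
  rw [eigMult_conjStarAlgAut_diagonal, eigMult_conjStarAlgAut_diagonal,
    card_eq_add_card_eq_neg μ hρ0, hcompl]
  refine IsLeast.csInf_eq ⟨exists_isQuasiOrthogonal_extension_conjStarAlgAut_diagonal u hρ0 hμ, ?_⟩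
  rintro d ⟨Q, -, hQ, hsub⟩
  obtain ⟨q, hpsd, hrank⟩ := hsub.exists_posSemidef_rank_le hsymm hQ
  exact (card_abs_ne_le_rank_smul_one_sub_mul_self u rfl hμ hattained hpsd).trans hrank
end

section
/- Let S be an n×n symmetric Seidel matrix with quasi-orthogonality index equal to 1. Then n is odd and the characteristic polynomial of S is x(x² - n)^((n-1)/2). -/
open Matrix Polynomial

/-
If `S` sits in a symmetric quasi-orthogonal matrix `Q` of order `n + 1` with `QᵀQ = qI`, then
`S² + uuᵀ = qI`, where `u` is the rest of the column of `Q` that `S` misses, and `u ≠ 0` because the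
index is not `0`. In an orthonormal eigenbasis of `S` this reads `diag(λᵢ²) + vvᵀ = qI`, so `v` has
a single nonzero entry `v₀` and all eigenvalues but `λ₀` are `±√q`. As `tr S = 0`, `λ₀` is an
integer multiple of `√q` with `λ₀² < q`, hence `λ₀ = 0`, the eigenvalues `±√q` occur equally often,
and `|u|² = v₀² = q`. On the other hand `uᵢ² = q - (n - 1)` from the diagonal of `S² + uuᵀ`, so
`q = n (q - n + 1)`, i.e. `q = n` unless `n = 1`.
-/

section Spectrum

open Finset

variable {ι : Type*}

lemma Finset.exists_sum_eq_intCast_mul_of_forall_eq_or_eq_neg {T : Finset ι} {ε : ι → ℝ}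
    {s : ℝ} (h : ∀ i ∈ T, ε i = s ∨ ε i = -s) : ∃ k : ℤ, ∑ i ∈ T, ε i = k * s := by
  classical
  induction T using Finset.induction_on with
  | empty => exact ⟨0, by simp⟩
  | insert a T ha ih =>
    obtain ⟨k, hk⟩ := ih fun i hi => h i (mem_insert_of_mem hi)
    rw [sum_insert ha, hk]
    rcases h a (mem_insert_self a T) with hs | hs
    · exact ⟨k + 1, by rw [hs]; push_cast; ring⟩
    · exact ⟨k - 1, by rw [hs]; push_cast; ring⟩

lemma Finset.eq_zero_of_add_sum_eq_zero_of_forall_eq_or_eq_neg {T : Finset ι} {ε : ι → ℝ}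
    {s x : ℝ} (h : ∀ i ∈ T, ε i = s ∨ ε i = -s) (hx : x ^ 2 < s ^ 2)
    (hsum : x + ∑ i ∈ T, ε i = 0) : x = 0 := by
  obtain ⟨k, hk⟩ := T.exists_sum_eq_intCast_mul_of_forall_eq_or_eq_neg h
  have hxk : x = -k * s := by linarith
  have hk0 : k = 0 := by
    rw [hxk, show (-k * s) ^ 2 = (k : ℝ) ^ 2 * s ^ 2 by ring] at hx
    have : (k : ℝ) ^ 2 < 1 := by
      by_contra! hk1
      linarith [mul_le_mul_of_nonneg_right hk1 (sq_nonneg s)]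
    exact Int.abs_lt_one_iff.1 ((sq_lt_one_iff_abs_lt_one k).1 (by exact_mod_cast this))
  simp [hxk, hk0]

lemma Finset.prod_X_sub_C_eq_of_forall_eq_or_eq_neg {T : Finset ι} {ε : ι → ℝ}
    {s : ℝ} (hs : s ≠ 0) (h : ∀ i ∈ T, ε i = s ∨ ε i = -s) (hsum : ∑ i ∈ T, ε i = 0) :
    Even #T ∧ ∏ i ∈ T, (X - C (ε i)) = (X ^ 2 - C (s ^ 2)) ^ (#T / 2) := by
  classical
  set P := T.filter (ε · = s)
  set N := T.filter (¬ ε · = s)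
  have hP : ∀ i ∈ P, ε i = s := fun i hi => (mem_filter.1 hi).2
  have hN : ∀ i ∈ N, ε i = -s := fun i hi => by
    obtain ⟨hiT, his⟩ := mem_filter.1 hi
    exact (h i hiT).resolve_left his
  have hcard : #P = #N := by
    rw [← sum_filter_add_sum_filter_not T (ε · = s), sum_congr rfl hP, sum_congr rfl hN,
      sum_const, sum_const, nsmul_eq_mul, nsmul_eq_mul] at hsum
    have : ((#P : ℝ) - #N) * s = 0 := by linarith
    exact_mod_cast sub_eq_zero.1 ((mul_eq_zero.1 this).resolve_right hs)
  have hT : #T = 2 * #P := by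
    have : #P + #N = #T := card_filter_add_card_filter_not _
    omega
  refine ⟨⟨#P, by omega⟩, ?_⟩
  rw [← prod_filter_mul_prod_filter_not T (ε · = s),
    prod_eq_pow_card fun i hi => congrArg (X - C ·) (hP i hi),
    prod_eq_pow_card fun i hi => congrArg (X - C ·) (hN i hi),
    ← hcard, ← mul_pow, hT, Nat.mul_div_cancel_left _ two_pos]
  simp only [map_neg, map_pow]
  ring

variable [Fintype ι] [DecidableEq ι]

theorem prod_X_sub_C_eq_of_diagonal_sq_add_vecMulVec {ε v : ι → ℝ} {q : ℝ} (hq : 0 < q)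
    (hv : v ≠ 0) (hε : ∑ i, ε i = 0) (h : diagonal (ε ^ 2) + vecMulVec v v = q • 1) :
    Odd (Fintype.card ι) ∧
      ∏ i, (X - C (ε i)) = X * (X ^ 2 - C q) ^ ((Fintype.card ι - 1) / 2) ∧ v ⬝ᵥ v = q := by
  have hdiag (i : ι) : ε i ^ 2 + v i ^ 2 = q := by
    simpa [sq, vecMulVec_apply] using congrFun (congrFun h i) i
  have hoff (i j : ι) (hij : i ≠ j) : v i * v j = 0 := by
    simpa [hij, vecMulVec_apply] using congrFun (congrFun h i) j
  obtain ⟨i₀, hi₀⟩ : ∃ i, v i ≠ 0 := Function.ne_iff.1 hv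
  have hv_eq_zero (j : ι) (hj : j ≠ i₀) : v j = 0 :=
    (mul_eq_zero.1 (hoff i₀ j hj.symm)).resolve_left hi₀
  set s := √q
  have hs : s ^ 2 = q := Real.sq_sqrt hq.le
  have hsign : ∀ j ∈ univ.erase i₀, ε j = s ∨ ε j = -s := fun j hj => by
    rw [← sq_eq_sq_iff_eq_or_eq_neg, hs, ← hdiag j, hv_eq_zero j (ne_of_mem_erase hj)]
    ring
  have hε₀ : ε i₀ = 0 := by
    refine (univ.erase i₀).eq_zero_of_add_sum_eq_zero_of_forall_eq_or_eq_neg hsign ?_ ?_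
    · linarith [hdiag i₀, sq_pos_of_ne_zero hi₀]
    · rwa [add_sum_erase _ _ (mem_univ i₀)]
  have hsum : ∑ i ∈ univ.erase i₀, ε i = 0 := by
    rwa [← add_sum_erase _ _ (mem_univ i₀), hε₀, zero_add] at hε
  obtain ⟨heven, hprod⟩ :=
    prod_X_sub_C_eq_of_forall_eq_or_eq_neg (Real.sqrt_pos.2 hq).ne' hsign hsum
  rw [card_erase_of_mem (mem_univ i₀), card_univ] at heven hprod
  rw [hs] at hprod
  refine ⟨?_, ?_, ?_⟩
  · have : 0 < Fintype.card ι := Fintype.card_pos_iff.2 ⟨i₀⟩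
    exact (Nat.sub_add_cancel this) ▸ heven.add_one
  · rw [← mul_prod_erase _ _ (mem_univ i₀), hε₀, map_zero, sub_zero, hprod]
  · rw [dotProduct, sum_eq_single i₀ fun j _ hj => by rw [hv_eq_zero j hj, zero_mul] (by simp),
      ← sq, ← hdiag i₀, hε₀]
    ring

theorem Matrix.IsHermitian.exists_diagonal_eigenvalues_sq_add_vecMulVec {A : Matrix ι ι ℝ}
    (hA : A.IsHermitian) {u : ι → ℝ} {q : ℝ} (h : A * A + vecMulVec u u = q • 1) :
    ∃ v : ι → ℝ, v ⬝ᵥ v = u ⬝ᵥ u ∧ diagonal (hA.eigenvalues ^ 2) + vecMulVec v v = q • 1 := by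
  set U : Matrix ι ι ℝ := (hA.eigenvectorUnitary : Matrix ι ι ℝ)
  have hUU : star U * U = 1 := Unitary.coe_star_mul_self _
  have hUU' : U * star U = 1 := Unitary.coe_mul_star_self _
  have hstar : star U = Uᵀ := by
    rw [star_eq_conjTranspose, conjTranspose_eq_transpose_of_trivial]
  have hD : star U * A * U = diagonal hA.eigenvalues := by
    simpa [Unitary.conjStarAlgAut_star_apply, U] using hA.conjStarAlgAut_star_eigenvectorUnitary
  have hvec : u ᵥ* U = star U *ᵥ u := by rw [hstar, mulVec_transpose]
  refine ⟨star U *ᵥ u, ?_, ?_⟩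
  · rw [dotProduct_mulVec, ← hvec, vecMul_vecMul, hUU', vecMul_one]
  · calc diagonal (hA.eigenvalues ^ 2) + vecMulVec (star U *ᵥ u) (star U *ᵥ u)
        = star U * A * U * (star U * A * U) + star U * vecMulVec u u * U := by
          rw [hD, diagonal_mul_diagonal, mul_vecMulVec, vecMulVec_mul, hvec, sq]
          rfl
      _ = star U * (A * A + vecMulVec u u) * U := by
          simp only [Matrix.mul_add, Matrix.add_mul, Matrix.mul_assoc]
          rw [← Matrix.mul_assoc U, hUU', Matrix.one_mul]
      _ = q • 1 := by rw [h, Matrix.mul_smul, Matrix.smul_mul, Matrix.mul_one, hUU]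

theorem Matrix.IsHermitian.charpoly_eq_of_mul_self_add_vecMulVec {A : Matrix ι ι ℝ}
    (hA : A.IsHermitian) (htr : A.trace = 0) {u : ι → ℝ} {q : ℝ} (hq : 0 < q) (hu : u ≠ 0)
    (h : A * A + vecMulVec u u = q • 1) :
    Odd (Fintype.card ι) ∧
      A.charpoly = X * (X ^ 2 - C q) ^ ((Fintype.card ι - 1) / 2) ∧ u ⬝ᵥ u = q := by
  obtain ⟨v, hvu, hv⟩ := hA.exists_diagonal_eigenvalues_sq_add_vecMulVec h
  have hv0 : v ≠ 0 := by
    rintro rfl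
    exact hu (dotProduct_self_eq_zero.1 (by rw [← hvu, zero_dotProduct]))
  have hsum : ∑ i, hA.eigenvalues i = 0 := by simpa [hA.trace_eq_sum_eigenvalues] using htr
  obtain ⟨hodd, hprod, hvv⟩ := prod_X_sub_C_eq_of_diagonal_sq_add_vecMulVec hq hv0 hsum hv
  refine ⟨hodd, ?_, hvu ▸ hvv⟩
  simpa [hA.charpoly_eq] using hprod

end Spectrum

lemma Function.Injective.exists_sum_eq_add_sum_comp {α β M : Type*} [Fintype α] [Fintype β]
    [AddCommMonoid M] {f : α → β} (hf : f.Injective)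
    (hcard : Fintype.card β = Fintype.card α + 1) :
    ∃ p, ∀ g : β → M, ∑ k, g k = g p + ∑ i, g (f i) := by
  classical
  set s := Finset.univ.map ⟨f, hf⟩
  obtain ⟨p, hp⟩ : ∃ p, sᶜ = {p} := Finset.card_eq_one.1 <| by
    rw [Finset.card_compl, Finset.card_map, Finset.card_univ, hcard, Nat.add_sub_cancel_left]
  refine ⟨p, fun g => ?_⟩
  rw [← Finset.sum_compl_add_sum s, hp, Finset.sum_singleton, Finset.sum_map]
  rfl

theorem IsPrincipalSubmatrix.exists_mul_self_add_vecMulVec {n : ℕ} {S : Matrix (Fin n) (Fin n) ℝ}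
    {Q : Matrix (Fin (n + 1)) (Fin (n + 1)) ℝ} (hSQ : IsPrincipalSubmatrix S Q) (hQ : Q.IsSymm)
    {q : ℝ} (hQQ : Qᵀ * Q = q • 1) : ∃ u : Fin n → ℝ, S * S + vecMulVec u u = q • 1 := by
  obtain ⟨f, hf, hSf⟩ := hSQ
  obtain ⟨p, hp⟩ := hf.injective.exists_sum_eq_add_sum_comp (M := ℝ) (by simp)
  refine ⟨fun i => Q (f i) p, ?_⟩
  ext i j
  have hij := congrFun (congrFun hQQ (f i)) (f j)
  rw [hQ.eq, mul_apply, hp] at hij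
  simpa [mul_apply, vecMulVec_apply, one_apply, hSf, hf.injective.eq_iff, hQ.apply p, add_comm]
    using hij

lemma qIndex_eq_zero_of_isQuasiOrthogonal {n : ℕ} {S : Matrix (Fin n) (Fin n) ℝ} (hS : S.IsSymm)
    (hSQ : IsQuasiOrthogonal S) : qIndex S = 0 :=
  Nat.eq_zero_of_le_zero <| Nat.sInf_le ⟨S, hS, hSQ, id, strictMono_id, fun _ _ => rfl⟩

lemma exists_isQuasiOrthogonal_of_qIndex_ne_zero {n : ℕ} {S : Matrix (Fin n) (Fin n) ℝ}
    (h : qIndex S ≠ 0) : ∃ Q : Matrix (Fin (n + qIndex S)) (Fin (n + qIndex S)) ℝ,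
      Q.IsSymm ∧ IsQuasiOrthogonal Q ∧ IsPrincipalSubmatrix S Q :=
  Nat.sInf_mem (Nat.nonempty_of_pos_sInf (Nat.pos_of_ne_zero h))

namespace IsSeidel

variable {n : ℕ} {S : Matrix (Fin n) (Fin n) ℝ}

lemma isHermitian (hS : IsSeidel S) : S.IsHermitian :=
  isHermitian_iff_isSymm.2 hS.1

lemma trace_eq_zero (hS : IsSeidel S) : S.trace = 0 := by
  simp [trace, hS.2.1]

open Finset in
lemma mul_self_apply_self (hS : IsSeidel S) (i : Fin n) : (S * S) i i = n - 1 := by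
  have hone : ∀ l ∈ univ.erase i, S i l * S l i = 1 := fun l hl => by
    rw [hS.1.apply i l]
    rcases hS.2.2 i l (ne_of_mem_erase hl).symm with h | h <;> simp [h]
  rw [mul_apply, ← add_sum_erase _ _ (mem_univ i), hS.2.1, zero_mul, zero_add, sum_congr rfl hone,
    sum_const, card_erase_of_mem (mem_univ i), card_univ, Fintype.card_fin, nsmul_one,
    Nat.cast_pred (Fin.pos i)]

end IsSeidel

theorem stmt6 {n : ℕ} (S : Matrix (Fin n) (Fin n) ℝ) (hS : IsSeidel S)
    (hind : qIndex S = 1) :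
    Odd n ∧ S.charpoly = X * (X ^ 2 - C (n : ℝ)) ^ ((n - 1) / 2) := by
  have hext := exists_isQuasiOrthogonal_of_qIndex_ne_zero (S := S) (by omega)
  rw [hind] at hext
  obtain ⟨Q, hQ, ⟨q, hq, hQQ⟩, hSQ⟩ := hext
  obtain ⟨u, hu⟩ := hSQ.exists_mul_self_add_vecMulVec hQ hQQ
  have hu0 : u ≠ 0 := by
    rintro rfl
    have := qIndex_eq_zero_of_isQuasiOrthogonal hS.1 ⟨q, hq, by simpa [hS.1.eq] using hu⟩
    omega
  obtain ⟨hodd, hchar, huu⟩ :=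
    hS.isHermitian.charpoly_eq_of_mul_self_add_vecMulVec hS.trace_eq_zero hq hu0 hu
  rw [Fintype.card_fin] at hodd hchar
  have hui (i : Fin n) : u i * u i = q - (n - 1) := by
    have := congrFun (congrFun hu i) i
    simp only [Matrix.add_apply, vecMulVec_apply, hS.mul_self_apply_self, Matrix.smul_apply,
      one_apply_eq, smul_eq_mul, mul_one] at this
    linarith
  have hqn : ((n : ℝ) - 1) * (q - n) = 0 := by
    simp only [dotProduct, hui, Finset.sum_const, Finset.card_univ, Fintype.card_fin,
      nsmul_eq_mul] at huu
    linear_combination huu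
  refine ⟨hodd, hchar.trans ?_⟩
  rcases mul_eq_zero.1 hqn with h | h
  · obtain rfl : n = 1 := by exact_mod_cast sub_eq_zero.1 h
    simp
  · rw [sub_eq_zero.1 h]
end

section
/- Let P(x) = (x-a₁)^{α₁}⋯(x-a_r)^{α_r} be a polynomial with integer coefficients, where a₁, …, a_r are distinct real numbers and α₁ ≥ α₂ ≥ ⋯ ≥ α_r. If α₁ = α₂ = ⋯ = α_k > α_{k+1}, then (x-a₁)(x-a₂)⋯(x-a_k) has integer coefficients. -/
open Matrix Polynomial

/-!
In characteristic zero, replacing `p` by `gcd p p'` lowers every root multiplicity by one, and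
since the Euclidean algorithm commutes with extension of scalars, so does its `d`-fold iterate.
For `d = α₁ - 1` the monic associate of the `d`-th iterate of `P` is `(x - a₁)⋯(x - a_k)`, which
is therefore defined over `ℚ`; as a monic factor of the monic integer polynomial `P` it has
integer coefficients by Gauss's lemma.
-/

namespace Polynomial

section IterGcdDerivative

variable {F : Type*} [Field F] [DecidableEq F]

noncomputable def iterGcdDerivative (p : F[X]) : ℕ → F[X]
  | 0 => p
  | t + 1 => EuclideanDomain.gcd (iterGcdDerivative p t) (derivative (iterGcdDerivative p t))

theorem map_iterGcdDerivative {K : Type*} [Field K] [DecidableEq K] (f : F →+* K) (p : F[X])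
    (t : ℕ) : (iterGcdDerivative p t).map f = iterGcdDerivative (p.map f) t := by
  induction t with
  | zero => rfl
  | succ t ih => simp only [iterGcdDerivative, ← gcd_map, ← derivative_map, ih]

theorem iterGcdDerivative_dvd (p : F[X]) (t : ℕ) : iterGcdDerivative p t ∣ p := by
  induction t with
  | zero => exact dvd_rfl
  | succ t ih => exact (EuclideanDomain.gcd_dvd_left _ _).trans ih

theorem iterGcdDerivative_ne_zero {p : F[X]} (hp : p ≠ 0) (t : ℕ) : iterGcdDerivative p t ≠ 0 :=
  ne_zero_of_dvd_ne_zero hp (iterGcdDerivative_dvd p t)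

variable [CharZero F]

theorem rootMultiplicity_gcd_derivative {p : F[X]} (hp : p ≠ 0) (x : F) :
    (EuclideanDomain.gcd p (derivative p)).rootMultiplicity x = p.rootMultiplicity x - 1 := by
  by_cases hx : p.IsRoot x
  · have hgcd : EuclideanDomain.gcd p (derivative p) ≠ 0 := by
      simp [EuclideanDomain.gcd_eq_zero_iff, hp]
    have hder : (derivative p).rootMultiplicity x = p.rootMultiplicity x - 1 :=
      derivative_rootMultiplicity_of_root hx
    have hd : derivative p ≠ 0 := fun hd => by
      rw [eq_C_of_natDegree_eq_zero (derivative_eq_zero.mp hd)] at hx hp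
      simp_all
    apply le_antisymm
    · rw [← hder, le_rootMultiplicity_iff hd]
      exact (pow_rootMultiplicity_dvd _ x).trans (EuclideanDomain.gcd_dvd_right _ _)
    · rw [le_rootMultiplicity_iff hgcd]
      refine EuclideanDomain.dvd_gcd ?_ (hder ▸ pow_rootMultiplicity_dvd _ x)
      exact (pow_dvd_pow _ (Nat.sub_le _ _)).trans (pow_rootMultiplicity_dvd p x)
  · have hgcd : ¬ (EuclideanDomain.gcd p (derivative p)).IsRoot x := fun h =>
      hx (isRoot_gcd_iff_isRoot_left_right.mp h).1
    rw [rootMultiplicity_eq_zero hgcd, rootMultiplicity_eq_zero hx]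

theorem rootMultiplicity_iterGcdDerivative {p : F[X]} (hp : p ≠ 0) (x : F) (t : ℕ) :
    (iterGcdDerivative p t).rootMultiplicity x = p.rootMultiplicity x - t := by
  induction t with
  | zero => rfl
  | succ t ih =>
    rw [iterGcdDerivative, rootMultiplicity_gcd_derivative (iterGcdDerivative_ne_zero hp t), ih]
    omega

end IterGcdDerivative

theorem eq_of_monic_of_splits_of_rootMultiplicity_eq {K : Type*} [Field K] {f g : K[X]}
    (hfm : f.Monic) (hgm : g.Monic) (hf : f.Splits) (hg : g.Splits)
    (h : ∀ x, f.rootMultiplicity x = g.rootMultiplicity x) : f = g := by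
  classical
  rw [hf.eq_prod_roots_of_monic hfm, hg.eq_prod_roots_of_monic hgm]
  congr 2
  ext x
  rw [count_roots, count_roots, h]

theorem rootMultiplicity_prod_X_sub_C_pow {K ι : Type*} [Field K] [DecidableEq K] (s : Finset ι)
    (a : ι → K) (e : ι → ℕ) (x : K) :
    (∏ i ∈ s, (X - C (a i)) ^ e i).rootMultiplicity x = ∑ i ∈ s, if x = a i then e i else 0 := by
  rw [← count_roots, roots_prod _ _ (Monic.ne_zero (monic_prod_of_monic _ _
    fun i _ => (monic_X_sub_C _).pow _)), Multiset.count_bind]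
  simp [Multiset.count_singleton]

theorem rootMultiplicity_prod_X_sub_C_eq_sub {K ι : Type*} [Field K] [Fintype ι] {a : ι → K}
    (ha : Function.Injective a) {s : Finset ι} {α : ι → ℕ} {d : ℕ} (hs : ∀ i ∈ s, α i = d + 1)
    (hsc : ∀ i ∉ s, α i ≤ d) (x : K) :
    (∏ i ∈ s, (X - C (a i))).rootMultiplicity x =
      (∏ i, (X - C (a i)) ^ α i).rootMultiplicity x - d := by
  classical
  have hT := rootMultiplicity_prod_X_sub_C_pow s a (fun _ => 1) x
  simp only [pow_one] at hT
  rw [hT, rootMultiplicity_prod_X_sub_C_pow]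
  by_cases hx : x ∈ Set.range a
  · obtain ⟨j, rfl⟩ := hx
    simp only [ha.eq_iff, Finset.sum_ite_eq, Finset.mem_univ, if_true]
    by_cases hj : j ∈ s
    · simp [hj, hs j hj]
    · simp [hj, hsc j hj]
  · have hx' : ∀ i, x ≠ a i := fun i h => hx ⟨i, h.symm⟩
    simp [hx']

theorem lifts_of_rootMultiplicity_eq_sub {K : Type*} [Field K] [CharZero K] {p : ℤ[X]}
    (hp : p.Monic) (hps : (p.map (Int.castRingHom K)).Splits) {T : K[X]} (hTm : T.Monic)
    (hTs : T.Splits) (d : ℕ)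
    (hT : ∀ x, T.rootMultiplicity x = (p.map (Int.castRingHom K)).rootMultiplicity x - d) :
    T ∈ lifts (Int.castRingHom K) := by
  classical
  have hcomp : (algebraMap ℚ K).comp (Int.castRingHom ℚ) = Int.castRingHom K := RingHom.ext_int _ _
  set G := iterGcdDerivative (p.map (Int.castRingHom ℚ)) d
  have hG : G ≠ 0 := iterGcdDerivative_ne_zero (hp.map _).ne_zero d
  set W := G * C G.leadingCoeff⁻¹
  have hGW : Associated W G :=
    associated_mul_unit_left G _ (isUnit_C.mpr (inv_ne_zero (leadingCoeff_ne_zero.mpr hG)).isUnit)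
  have hWdvd : W ∣ p.map (Int.castRingHom ℚ) := hGW.dvd.trans (iterGcdDerivative_dvd _ d)
  obtain ⟨g, hg⟩ := IsIntegrallyClosed.eq_map_mul_C_of_dvd (K := ℚ) hp hWdvd
  rw [(monic_mul_leadingCoeff_inv hG).leadingCoeff, C_1, mul_one] at hg
  have hWK : W.map (algebraMap ℚ K) ∣ p.map (Int.castRingHom K) := by
    simpa [Polynomial.map_map, hcomp] using Polynomial.map_dvd (algebraMap ℚ K) hWdvd
  have hTW : T = W.map (algebraMap ℚ K) := by
    refine eq_of_monic_of_splits_of_rootMultiplicity_eq hTm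
      ((monic_mul_leadingCoeff_inv hG).map _) hTs (hps.of_dvd (hp.map _).ne_zero hWK) fun x => ?_
    have hroots := (hGW.map (mapRingHom (algebraMap ℚ K))).roots_eq
    rw [coe_mapRingHom] at hroots
    rw [hT, ← count_roots (W.map _), hroots, count_roots, map_iterGcdDerivative,
      Polynomial.map_map, hcomp, rootMultiplicity_iterGcdDerivative (hp.map _).ne_zero]
  exact ⟨g, by rw [hTW, ← hg, Polynomial.map_map, ← hcomp]; rfl⟩

end Polynomial

theorem stmt7_general {r k : ℕ} (hr : 0 < r) (hkr : k < r)
    (a : Fin r → ℝ) (ha : Function.Injective a) (α : Fin r → ℕ)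
    (P : Polynomial ℝ) (hP : P = ∏ i, (X - C (a i)) ^ (α i))
    (hint : ∀ i, ∃ z : ℤ, P.coeff i = (z : ℝ))
    (heq : ∀ i : Fin r, i.1 < k → α i = α ⟨0, hr⟩)
    (hgt : ∀ i : Fin r, k ≤ i.1 → α i < α ⟨0, hr⟩) :
    ∀ i, ∃ z : ℤ,
      (∏ j ∈ Finset.univ.filter (fun j : Fin r => j.1 < k), (X - C (a j))).coeff i = (z : ℝ) := by
  have hm : 0 < α ⟨0, hr⟩ := (Nat.zero_le _).trans_lt (hgt ⟨k, hkr⟩ le_rfl)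
  have hPm : P.Monic := hP ▸ monic_prod_of_monic _ _ fun j _ => (monic_X_sub_C _).pow _
  have hPs : P.Splits := hP ▸ Splits.prod fun j _ => (Splits.X_sub_C _).pow _
  have hPlifts : P ∈ lifts (Int.castRingHom ℝ) :=
    (lifts_iff_coeff_lifts P).mpr fun n => (hint n).imp fun z hz => by simp [hz]
  obtain ⟨p, hpP, -, hp⟩ := lifts_and_degree_eq_and_monic hPlifts hPm
  have hTlifts := lifts_of_rootMultiplicity_eq_sub hp (hpP ▸ hPs)
    (T := ∏ j ∈ Finset.univ.filter (fun j : Fin r => j.1 < k), (X - C (a j)))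
    (monic_prod_of_monic _ _ fun j _ => monic_X_sub_C _) (Splits.prod fun j _ => Splits.X_sub_C _)
    (α ⟨0, hr⟩ - 1) fun x => by
      rw [hpP, hP]
      refine rootMultiplicity_prod_X_sub_C_eq_sub ha (fun i hi => ?_) (fun i hi => ?_) x
      · have := heq i (Finset.mem_filter.mp hi).2; omega
      · have := hgt i (by simpa using hi); omega
  intro n
  obtain ⟨z, hz⟩ := (lifts_iff_coeff_lifts _).mp hTlifts n
  exact ⟨z, hz.symm⟩

theorem stmt7 {r k : ℕ} (hr : 0 < r) (hk1 : 1 ≤ k) (hkr : k < r)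
    (a : Fin r → ℝ) (ha : Function.Injective a) (α : Fin r → ℕ)
    (hanti : Antitone α)
    (P : Polynomial ℝ) (hP : P = ∏ i, (X - C (a i)) ^ (α i))
    (hint : ∀ i, ∃ z : ℤ, P.coeff i = (z : ℝ))
    (heq : ∀ i : Fin r, i.1 < k → α i = α ⟨0, hr⟩)
    (hgt : ∀ i : Fin r, k ≤ i.1 → α i < α ⟨0, hr⟩) :
    ∀ i, ∃ z : ℤ,
      (∏ j ∈ Finset.univ.filter (fun j : Fin r => j.1 < k), (X - C (a j))).coeff i = (z : ℝ) :=
  stmt7_general hr hkr a ha α P hP hint heq hgt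
end

section
/- Let S be a symmetric Seidel matrix of order n. Then det(S) ≡ 1 - n (mod 4). -/
open Matrix Polynomial

/-! Write `S = (J - I) + 2 • A`, where `J` is the all-ones matrix and `A` is the symmetric
`{0, -1}`-matrix with zero diagonal recording the entries `-1` of `S`. Expanding the determinant to
first order in `2` gives `det S ≡ det (J - I) + 2 tr (A adj (J - I)) (mod 4)`. The trace is even,
since `A` and `adj (J - I)` are symmetric and `A` has zero diagonal, while
`det (J - I) = (-1)ⁿ (1 - n) ≡ 1 - n (mod 4)`. -/

open Finset

theorem Finset.univ_filter_card_le_one {ι : Type*} [Fintype ι] [DecidableEq ι] :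
    univ.filter (fun s : Finset ι => s.card ≤ 1) =
      cons ∅ (univ.map ⟨_, singleton_injective⟩) (by simp) := by
  ext s
  simp only [mem_filter, mem_univ, true_and, mem_cons, mem_map, Function.Embedding.coeFn_mk,
    Nat.le_one_iff_eq_zero_or_eq_one, card_eq_zero, card_eq_one]
  grind

theorem Finset.even_sum_sum_of_symm {ι M : Type*} [Fintype ι] [AddCommMonoid M] (g : ι → ι → M)
    (hsymm : ∀ i j, g i j = g j i) (hdiag : ∀ i, g i i = 0) : Even (∑ i, ∑ j, g i j) := by
  let : LinearOrder ι := LinearOrder.lift' _ (Fintype.equivFin ι).injective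
  have hsplit : ∀ i j, g i j = (if i < j then g i j else 0) + (if j < i then g j i else 0) := by
    intro i j
    rcases lt_trichotomy i j with h | rfl | h
    · simp [h, h.not_gt]
    · simp [hdiag]
    · simp [h, h.not_gt, hsymm i j]
  refine ⟨∑ i, ∑ j, if i < j then g i j else 0, ?_⟩
  calc ∑ i, ∑ j, g i j
      = ∑ i, ∑ j, (if i < j then g i j else 0) + ∑ i, ∑ j, (if j < i then g j i else 0) := by
        simp only [← sum_add_distrib, ← hsplit]
    _ = _ := by rw [sum_comm (f := fun i j => if j < i then g j i else 0)]

theorem MultilinearMap.sq_dvd_map_add_smul_sub {R ι M : Type*} [CommRing R] [AddCommGroup M]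
    [Module R M] [Fintype ι] [DecidableEq ι]
    (f : MultilinearMap R (fun _ : ι => M) R) (u v : ι → M) (c : R) :
    c ^ 2 ∣ f (u + c • v) - f u - c * ∑ k, f (Function.update u k (v k)) := by
  have hexpand : f (u + c • v) = ∑ s : Finset ι, c ^ s.card * f (s.piecewise v u) := by
    rw [add_comm, f.map_add_univ]
    refine sum_congr rfl fun s _ => ?_
    rw [← smul_eq_mul, ← prod_const, ← f.map_piecewise_smul]
    congr 1
    ext i
    by_cases hi : i ∈ s <;> simp [hi]
  have hsmall : ∑ s ∈ univ.filter (fun s : Finset ι => s.card ≤ 1), c ^ s.card * f (s.piecewise v u)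
      = f u + c * ∑ k, f (Function.update u k (v k)) := by
    rw [univ_filter_card_le_one, sum_cons, sum_map, mul_sum]
    simp [piecewise_singleton]
  have hlarge : c ^ 2 ∣ ∑ s ∈ univ.filter (fun s : Finset ι => ¬ s.card ≤ 1),
      c ^ s.card * f (s.piecewise v u) :=
    dvd_sum fun s hs => (pow_dvd_pow c (by simp at hs; omega)).mul_right _
  rw [hexpand, ← sum_filter_add_sum_filter_not _ (fun s => s.card ≤ 1), hsmall]
  convert hlarge using 1
  ring

namespace Matrix

theorem even_trace_mul_of_isSymm {R n : Type*} [NonUnitalNonAssocSemiring R] [Fintype n]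
    {A B : Matrix n n R} (hA : A.IsSymm) (hB : B.IsSymm)
    (hA0 : ∀ i, A i i = 0) : Even (trace (A * B)) := by
  refine even_sum_sum_of_symm (fun i j => A i j * B j i) (fun i j => ?_) (fun i => by simp [hA0])
  rw [hA.apply i j, hB.apply i j]

variable {R n : Type*} [CommRing R] [Fintype n] [DecidableEq n]

theorem det_updateRow_eq_sum_mul_adjugate (M : Matrix n n R) (k : n) (v : n → R) :
    det (M.updateRow k v) = ∑ j, v j * adjugate M j k := by
  rw [det_eq_sum_mul_adjugate_row _ k]
  refine sum_congr rfl fun j _ => ?_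
  rw [updateRow_self, adjugate_apply, adjugate_apply, updateRow_idem]

theorem sq_dvd_det_add_smul_sub (M A : Matrix n n R) (c : R) :
    c ^ 2 ∣ det (M + c • A) - det M - c * trace (A * adjugate M) := by
  have hrows : ∑ k, det (M.updateRow k (A k)) = trace (A * adjugate M) := by
    simp only [det_updateRow_eq_sum_mul_adjugate, trace, diag_apply, mul_apply]
  rw [← hrows]
  exact detRowAlternating.toMultilinearMap.sq_dvd_map_add_smul_sub M A c

theorem det_of_const_one_sub_one :
    det (of (fun _ _ : n => (1 : R)) - 1) = (-1) ^ Fintype.card n * (1 - (Fintype.card n : R)) := by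
  have h : of (fun _ _ : n => (1 : R)) - 1 =
      -(1 + replicateCol Unit (fun _ : n => (-1 : R)) * replicateRow Unit (fun _ : n => (1 : R))) := by
    ext i j
    simp only [sub_apply, of_apply, neg_apply, add_apply, mul_apply, univ_unique,
      PUnit.default_eq_unit, replicateCol_apply, replicateRow_apply, mul_one, sum_neg_distrib,
      sum_const, card_singleton, one_smul, neg_add_rev, neg_neg]
    abel
  rw [h, det_neg, det_one_add_replicateCol_mul_replicateRow]
  simp [dotProduct, sub_eq_add_neg]

end Matrix

theorem stmt8 {n : ℕ} (S : Matrix (Fin n) (Fin n) ℤ) (hsymm : S.IsSymm)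
    (hdiag : ∀ i, S i i = 0) (hoff : ∀ i j, i ≠ j → S i j = 1 ∨ S i j = -1) :
    S.det ≡ 1 - (n : ℤ) [ZMOD 4] := by
  set A : Matrix (Fin n) (Fin n) ℤ := of fun i j => if S i j = -1 then -1 else 0
  set M : Matrix (Fin n) (Fin n) ℤ := of (fun _ _ => 1) - 1
  have hS : S = M + (2 : ℤ) • A := by
    ext i j
    rcases eq_or_ne i j with rfl | hij
    · simp [M, A, hdiag]
    · rcases hoff i j hij with h | h <;> simp [M, A, h, one_apply_ne hij]
  have hM : M.IsSymm := (IsSymm.ext fun _ _ => rfl).sub isSymm_one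
  have hA : A.IsSymm := IsSymm.ext fun i j => by simp [A, hsymm.apply i j]
  obtain ⟨t, ht⟩ := even_trace_mul_of_isSymm hA hM.adjugate (fun i => by simp [A, hdiag])
  obtain ⟨r, hr⟩ := sq_dvd_det_add_smul_sub M A 2
  rw [← hS, ht, det_of_const_one_sub_one, Fintype.card_fin] at hr
  have hsign : (-1) ^ n * (1 - (n : ℤ)) ≡ 1 - n [ZMOD 4] := by
    rcases Nat.even_or_odd n with hn | hn
    · rw [hn.neg_one_pow, one_mul]
    · obtain ⟨k, rfl⟩ := hn
      rw [Odd.neg_one_pow ⟨k, rfl⟩, Int.modEq_iff_dvd]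
      exact ⟨-k, by push_cast; ring⟩
  exact (Int.modEq_iff_dvd.mpr ⟨-(t + r), by linear_combination -hr⟩).trans hsign
end
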